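/- Let p be a prime, let r ≥ 1 be an integer, let I be a finite index set, and let (b_i)_{i∈I} be natural numbers with ∑_{i∈I} b_i < r. If (a_i)_{i∈I} and (a'_i)_{i∈I} are integers with a_i ≡ a'_i (mod p^{⌈(p/(p−1))·r⌉}) for every i ∈ I, then ∏_{i∈I} C(a_i, b_i) ≡ ∏_{i∈I} C(a'_i, b_i) (mod p^r). -/

import Mathlib

/-!
By Chu–Vandermonde, `C(a', k) - C(a, k) = ∑_{j ≥ 1} C(a' - a, j) C(a, k - j)`, and the identity
`j C(c, j) = c C(c - 1, j - 1)` shows that `p ^ (v_p(j) + r) ∣ c` forces `p ^ r ∣ C(c, j)`.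
Since `v_p(j) (p - 1) < j ≤ b_i < r`, we have `v_p(j) + r ≤ ⌈p r / (p - 1)⌉`, so already each factor
`C(a_i, b_i)` is congruent to `C(a'_i, b_i)` modulo `p ^ r`.
-/

open Finset

theorem Ring.smul_choose_eq_mul_choose_sub_one {R : Type*} [NonAssocRing R] [Pow R ℕ]
    [BinomialRing R] [NatPowAssoc R] (r : R) {n : ℕ} (hn : 1 ≤ n) :
    n • choose r n = r * choose (r - 1) (n - 1) := by
  simpa using choose_smul_choose r hn

theorem pow_dvd_choose_of_pow_add_padicValNat_dvd {p r j : ℕ} (hp : p.Prime) (hj : j ≠ 0)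
    {c : ℤ} (hc : (p : ℤ) ^ (padicValNat p j + r) ∣ c) : (p : ℤ) ^ r ∣ Ring.choose c j := by
  set v := padicValNat p j
  obtain ⟨u, hu, hpu⟩ : ∃ u : ℕ, (p : ℤ) ^ v * u = j ∧ IsCoprime (p : ℤ) u := by
    refine ⟨j / p ^ j.factorization p, ?_, ?_⟩
    · have := Nat.ordProj_mul_ordCompl_eq_self j p
      rw [Nat.factorization_def j hp] at this ⊢
      exact_mod_cast this
    · rw [Int.isCoprime_iff_gcd_eq_one, Int.gcd_natCast_natCast]
      exact Nat.coprime_ordCompl hp hj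
  have hdvd : (p : ℤ) ^ v * (p : ℤ) ^ r ∣ (p : ℤ) ^ v * (u * Ring.choose c j) := by
    rw [← pow_add, ← mul_assoc, hu, ← nsmul_eq_mul,
      Ring.smul_choose_eq_mul_choose_sub_one c (Nat.one_le_iff_ne_zero.mpr hj)]
    exact hc.mul_right _
  exact hpu.pow_left.dvd_of_dvd_mul_left
    ((mul_dvd_mul_iff_left (pow_ne_zero _ (by exact_mod_cast hp.ne_zero))).mp hdvd)

theorem Ring.choose_modEq_choose {p r k M : ℕ} (hp : p.Prime)
    (hM : ∀ j, j ≠ 0 → j ≤ k → padicValNat p j + r ≤ M) {a a' : ℤ}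
    (h : a ≡ a' [ZMOD (p : ℤ) ^ M]) : choose a k ≡ choose a' k [ZMOD (p : ℤ) ^ r] := by
  have hvandermonde :
      choose a' k = ∑ j ∈ range (k + 1), choose (a' - a) j * choose a (k - j) := by
    rw [← Nat.sum_antidiagonal_eq_sum_range_succ (fun i j => choose (a' - a) i * choose a j),
      ← add_choose_eq k (Commute.all _ _), sub_add_cancel]
  rw [hvandermonde, sum_range_succ', choose_zero_right, one_mul, Nat.sub_zero,
    Int.modEq_iff_dvd, add_sub_cancel_right]
  refine dvd_sum fun j hj =>
    (pow_dvd_choose_of_pow_add_padicValNat_dvd hp j.succ_ne_zero ?_).mul_right _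
  exact (pow_dvd_pow _ (hM _ j.succ_ne_zero (by simpa using hj))).trans h.dvd

theorem padicValNat_mul_sub_one_lt {p j : ℕ} (hp : p.Prime) (hj : j ≠ 0) :
    padicValNat p j * (p - 1) < j := by
  set v := padicValNat p j
  have hbernoulli : 1 + v * ((p : ℤ) - 1) ≤ (p : ℤ) ^ v := by
    simpa using one_add_mul_le_pow (a := (p : ℤ) - 1) (by linarith [hp.one_lt]) v
  have hpow : p ^ v ≤ j := Nat.le_of_dvd (Nat.pos_of_ne_zero hj) pow_padicValNat_dvd
  zify [hp.one_le] at hpow ⊢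
  linarith

theorem add_le_toNat_ceil_div_sub_one_mul {p r v : ℕ} (hp : 1 < p) (h : v * (p - 1) ≤ r) :
    v + r ≤ (⌈((p : ℚ) / ((p : ℚ) - 1)) * (r : ℚ)⌉).toNat := by
  have hp' : (1 : ℚ) < p := by exact_mod_cast hp
  have hvr : (v : ℚ) * (p - 1) ≤ r := by
    rw [← Nat.cast_one, ← Nat.cast_sub hp.le, ← Nat.cast_mul]
    exact_mod_cast h
  have hq : ((v + r : ℕ) : ℚ) ≤ (p : ℚ) / ((p : ℚ) - 1) * r := by
    rw [div_mul_eq_mul_div, le_div_iff₀ (by linarith)]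
    push_cast
    linarith
  have : ((v + r : ℕ) : ℤ) ≤ ⌈(p : ℚ) / ((p : ℚ) - 1) * r⌉ := by
    exact_mod_cast hq.trans (Int.le_ceil _)
  omega

theorem prod_choose_modEq_of_modEq_general (p : ℕ) (hp : p.Prime) (r : ℕ)
    (I : Type*) [Fintype I] (b : I → ℕ) (hb : (∑ i, b i) < r)
    (a a' : I → ℤ)
    (h : ∀ i, a i ≡ a' i [ZMOD (p : ℤ) ^ (⌈((p : ℚ) / ((p : ℚ) - 1)) * (r : ℚ)⌉).toNat]) :
    (∏ i, Ring.choose (a i) (b i)) ≡ (∏ i, Ring.choose (a' i) (b i)) [ZMOD (p : ℤ) ^ r] := by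
  refine Int.ModEq.prod fun i _ => Ring.choose_modEq_choose hp (fun j hj hjb => ?_) (h i)
  have hbi : b i < r := (single_le_sum (fun _ _ => Nat.zero_le _) (mem_univ i)).trans_lt hb
  exact add_le_toNat_ceil_div_sub_one_mul hp.one_lt
    ((padicValNat_mul_sub_one_lt hp hj).le.trans (by omega))

/-- Let `p` be a prime, `r ≥ 1`, `I` a finite index set and `(b_i)` naturals with
`∑ b_i < r`. If `a_i ≡ a'_i (mod p^⌈(p/(p-1))·r⌉)` for all `i`, then
`∏ C(a_i, b_i) ≡ ∏ C(a'_i, b_i) (mod p^r)`. -/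
theorem prod_choose_modEq_of_modEq (p : ℕ) (hp : p.Prime) (r : ℕ) (hr : 1 ≤ r)
    (I : Type*) [Fintype I] (b : I → ℕ) (hb : (∑ i, b i) < r)
    (a a' : I → ℤ)
    (h : ∀ i, a i ≡ a' i [ZMOD (p : ℤ) ^ (⌈((p : ℚ) / ((p : ℚ) - 1)) * (r : ℚ)⌉).toNat]) :
    (∏ i, Ring.choose (a i) (b i)) ≡ (∏ i, Ring.choose (a' i) (b i)) [ZMOD (p : ℤ) ^ r] :=
  prod_choose_modEq_of_modEq_general p hp r I b hb a a' h
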